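/- arXiv:2504.17948 — 2 statements merged into one kernel-verified Lean document; each statement's English description precedes it below -/
import Mathlib

section
/- Let (F₀, c₀) be a project with index r₀ ≥ 0, and let w₀(y) = (y - r₀)⁺. For any other project (F₁, c₁) with index r₁ ≥ r₀, the w₀-induced index of (F₁, c₁) equals r₁ - r₀. In particular, the debt contract w₀ preserves the ordering of indices among projects with index at least r₀. -/
open MeasureTheory

/-! Writing `(y - r)⁺` for the payoff of a call with strike `r`, a call on the call
`(y - r₀)⁺` with strike `r ≥ 0` is the call `(y - (r₀ + r))⁺`. Hence for `r ≥ 0` the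
equation for the `w₀`-induced index of `(F₁, c₁)` is the index equation of `(F₁, c₁)` at
`r₀ + r`, whose least solution is `r₁`. A negative strike `r` adds `-r > 0` to the whole
payoff, so the left side strictly exceeds `∫ (y - r₀)⁺ dF₁ ≥ ∫ (y - r₁)⁺ dF₁ = c₁`. -/

lemma max_max_sub_zero_sub_zero {α : Type*} [AddCommGroup α] [LinearOrder α]
    [IsOrderedAddMonoid α] (y a : α) {b : α} (hb : 0 ≤ b) :
    max (max (y - a) 0 - b) 0 = max (y - (a + b)) 0 := by
  rw [← max_sub_sub_right, max_assoc, zero_sub, max_eq_right (neg_nonpos.mpr hb), sub_sub]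

section Integrals

variable {μ : Measure ℝ}

lemma integral_max_max_sub_zero_sub_zero (a : ℝ) {b : ℝ} (hb : 0 ≤ b) :
    ∫ y, max (max (y - a) 0 - b) 0 ∂μ = ∫ y, max (y - (a + b)) 0 ∂μ := by
  simp only [max_max_sub_zero_sub_zero _ a hb]

lemma integrable_max_sub_zero [IsFiniteMeasure μ] (hμ : Integrable id μ) (a : ℝ) :
    Integrable (fun y => max (y - a) 0) μ :=
  (hμ.sub (integrable_const a)).sup (integrable_const 0)

lemma integral_max_sub_zero_anti [IsFiniteMeasure μ] (hμ : Integrable id μ) {a b : ℝ}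
    (hab : a ≤ b) : ∫ y, max (y - b) 0 ∂μ ≤ ∫ y, max (y - a) 0 ∂μ :=
  integral_mono (integrable_max_sub_zero hμ b) (integrable_max_sub_zero hμ a)
    fun y => max_le_max (by linarith) le_rfl

lemma integral_max_max_sub_zero_sub_zero_of_nonpos [IsProbabilityMeasure μ]
    (hμ : Integrable id μ) (a : ℝ) {r : ℝ} (hr : r ≤ 0) :
    ∫ y, max (max (y - a) 0 - r) 0 ∂μ = ∫ y, max (y - a) 0 ∂μ - r := by
  have hpos : ∀ y : ℝ, max (max (y - a) 0 - r) 0 = max (y - a) 0 - r := fun y =>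
    max_eq_left (by linarith [le_max_right (y - a) 0])
  simp only [hpos]
  rw [integral_sub (integrable_max_sub_zero hμ a) (integrable_const r), integral_const,
    probReal_univ, one_smul]

end Integrals

theorem stmt_2_general (F₁ : Measure ℝ) [IsProbabilityMeasure F₁]
    (hInt₁ : Integrable id F₁)
    (c₁ : ℝ)
    (r₀ r₁ : ℝ) (hr₀₁ : r₀ ≤ r₁)
    (hIndex₁ : IsLeast {r : ℝ | c₁ = ∫ y, max (y - r) 0 ∂F₁} r₁) :
    IsLeast {r : ℝ | c₁ = ∫ y, max (max (y - r₀) 0 - r) 0 ∂F₁} (r₁ - r₀) := by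
  refine ⟨?_, fun r hr => ?_⟩
  · rw [Set.mem_ofPred_eq, integral_max_max_sub_zero_sub_zero r₀ (sub_nonneg.mpr hr₀₁),
      add_sub_cancel]
    exact hIndex₁.1
  rcases le_or_gt 0 r with hr_nonneg | hr_neg
  · have hshift : r₀ + r ∈ {r : ℝ | c₁ = ∫ y, max (y - r) 0 ∂F₁} := by
      rwa [Set.mem_ofPred_eq, ← integral_max_max_sub_zero_sub_zero r₀ hr_nonneg]
    linarith [hIndex₁.2 hshift]
  · have hc₁ : c₁ = ∫ y, max (y - r₀) 0 ∂F₁ - r := by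
      rwa [Set.mem_ofPred_eq, integral_max_max_sub_zero_sub_zero_of_nonpos hInt₁ r₀
        hr_neg.le] at hr
    linarith [hIndex₁.1.trans_le (integral_max_sub_zero_anti hInt₁ hr₀₁)]

/-- Let `(F₀, c₀)` have index `r₀ ≥ 0` and let `w₀ y = (y - r₀)⁺`.
For any other project `(F₁, c₁)` with index `r₁ ≥ r₀`, the `w₀`-induced index of
`(F₁, c₁)` (smallest solution `r` of `c₁ = ∫ (w₀ y - r)⁺ dF₁`) equals `r₁ - r₀`.
In particular `w₀` preserves the ordering of indices among projects with index ≥ `r₀`. -/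
theorem stmt_2 (F₀ F₁ : Measure ℝ) [IsProbabilityMeasure F₀] [IsProbabilityMeasure F₁]
    (hnn₀ : ∀ᵐ y ∂F₀, 0 ≤ y) (hnn₁ : ∀ᵐ y ∂F₁, 0 ≤ y)
    (hInt₀ : Integrable id F₀) (hInt₁ : Integrable id F₁)
    (c₀ c₁ : ℝ) (hc₀ : 0 ≤ c₀) (hc₁ : 0 ≤ c₁)
    (r₀ r₁ : ℝ) (hr₀ : 0 ≤ r₀) (hr₀₁ : r₀ ≤ r₁)
    (hIndex₀ : IsLeast {r : ℝ | c₀ = ∫ y, max (y - r) 0 ∂F₀} r₀)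
    (hIndex₁ : IsLeast {r : ℝ | c₁ = ∫ y, max (y - r) 0 ∂F₁} r₁) :
    IsLeast {r : ℝ | c₁ = ∫ y, max (max (y - r₀) 0 - r) 0 ∂F₁} (r₁ - r₀) :=
  stmt_2_general F₁ hInt₁ c₁ r₀ r₁ hr₀₁ hIndex₁
end

section
/- Let (F₀, c₀) be a project with E_F₀[y] ≥ c₀, surplus s₀ = E_F₀[y] - c₀, and index r₀ the smallest solution of c₀ = ∫ (y - r₀)⁺ dF₀(y). Then r₀ ≥ s₀, with strict inequality whenever F₀ is not a point mass (i.e., whenever ∫ (y - s₀)⁺ dF₀ > ∫ (y - s₀) dF₀). -/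
/-!
Since `(y - r)⁺ ≥ y - r`, the defining equation gives `c₀ = ∫ (y - r₀)⁺ dF₀ ≥ E[y] - r₀`,
i.e. `r₀ ≥ s₀`. Conversely, `∫ (y - s₀) dF₀ = c₀`, so if `r₀ ≤ s₀` the antitonicity of
`r ↦ ∫ (y - r)⁺ dF₀` forces `∫ (y - s₀)⁺ dF₀ ≤ c₀ = ∫ (y - s₀) dF₀`.
-/

open MeasureTheory

section PositivePart

variable {α : Type*} [MeasurableSpace α] {μ : Measure α} {f : α → ℝ}

lemma integral_sub_const_of_isProbabilityMeasure [IsProbabilityMeasure μ]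
    (hf : Integrable f μ) (r : ℝ) : ∫ x, (f x - r) ∂μ = (∫ x, f x ∂μ) - r := by
  simp [integral_sub hf (integrable_const r)]

lemma integral_sub_const_le_integral_max_sub_const [IsFiniteMeasure μ]
    (hf : Integrable f μ) (r : ℝ) : ∫ x, (f x - r) ∂μ ≤ ∫ x, max (f x - r) 0 ∂μ :=
  integral_mono (hf.sub (integrable_const r)) (hf.sub (integrable_const r)).pos_part
    fun _ => le_max_left _ _

lemma antitone_integral_max_sub_const [IsFiniteMeasure μ] (hf : Integrable f μ) :
    Antitone fun r => ∫ x, max (f x - r) 0 ∂μ := fun r r' hrr' =>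
  integral_mono (hf.sub (integrable_const r')).pos_part (hf.sub (integrable_const r)).pos_part
    fun _ => max_le_max (by linarith) le_rfl

end PositivePart

theorem stmt_4_general (F₀ : Measure ℝ) [IsProbabilityMeasure F₀]
    (hInt : Integrable id F₀)
    (c₀ : ℝ)
    (s₀ : ℝ) (hs₀ : s₀ = (∫ y, y ∂F₀) - c₀)
    (r₀ : ℝ) (hIndex : IsLeast {r : ℝ | c₀ = ∫ y, max (y - r) 0 ∂F₀} r₀) :
    s₀ ≤ r₀ ∧
      ((∫ y, (y - s₀) ∂F₀) < ∫ y, max (y - s₀) 0 ∂F₀ → s₀ < r₀) := by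
  have hr₀ : c₀ = ∫ y, max (y - r₀) 0 ∂F₀ := hIndex.1
  have hmean (r : ℝ) : ∫ y, (y - r) ∂F₀ = (∫ y, y ∂F₀) - r :=
    integral_sub_const_of_isProbabilityMeasure hInt r
  refine ⟨?_, fun hstrict => ?_⟩
  · have hlower : ∫ y, (y - r₀) ∂F₀ ≤ ∫ y, max (y - r₀) 0 ∂F₀ :=
      integral_sub_const_le_integral_max_sub_const hInt r₀
    linarith [hmean r₀]
  · by_contra! hr₀s₀
    have hmono : ∫ y, max (y - s₀) 0 ∂F₀ ≤ ∫ y, max (y - r₀) 0 ∂F₀ :=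
      antitone_integral_max_sub_const hInt hr₀s₀
    linarith [hmean s₀]

/-- For a project `(F₀, c₀)` with `E[y] ≥ c₀`, surplus `s₀ = E[y] - c₀`,
and index `r₀` (smallest solution of `c₀ = ∫ (y - r₀)⁺ dF₀`), we have `r₀ ≥ s₀`,
strictly whenever `∫ (y - s₀)⁺ dF₀ > ∫ (y - s₀) dF₀`. -/
theorem stmt_4 (F₀ : Measure ℝ) [IsProbabilityMeasure F₀]
    (hnn : ∀ᵐ y ∂F₀, 0 ≤ y) (hInt : Integrable id F₀)
    (c₀ : ℝ) (hc₀ : 0 ≤ c₀) (hE : c₀ ≤ ∫ y, y ∂F₀)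
    (s₀ : ℝ) (hs₀ : s₀ = (∫ y, y ∂F₀) - c₀)
    (r₀ : ℝ) (hIndex : IsLeast {r : ℝ | c₀ = ∫ y, max (y - r) 0 ∂F₀} r₀) :
    s₀ ≤ r₀ ∧
      ((∫ y, (y - s₀) ∂F₀) < ∫ y, max (y - s₀) 0 ∂F₀ → s₀ < r₀) :=
  stmt_4_general F₀ hInt c₀ s₀ hs₀ r₀ hIndex
end
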